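/- Let J ⊆ S = K[x_0,…,x_n] be a strongly stable monomial ideal generated by s monomials of degree r, and let P be a natural number such that dim_K (S/J)_{r+1} ≤ P. Then the following are equivalent: (a) dim_K (S/J)_{r+1} = P; (b) there exists a homogeneous ideal I ⊆ S, generated by its degree-r homogeneous component, such that I_r is a vector-space complement of ⟨N(J)_r⟩ in S_r and dim_K (S/I)_{r+1} = P. -/

import Mathlib

/-!
(a) ⇒ (b): take `I = J`, i.e. `V` spanned by the generators. (b) ⇒ (a): it suffices that
`dim J_{r+1} ≤ dim I_{r+1}`. The monomials of `J_{r+1}` lie in the upper shadow `{m x_i : m ∈ B}`,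
and by strong stability each of them can be written `m x_i` with `m ∈ B` and `x_i` the smallest
variable dividing it. Since `V + ⟨N(J)_r⟩ = S_r`, each `m ∈ B` is `v_m + w_m` with `v_m ∈ V` and
`w_m ∈ ⟨N(J)_r⟩`; the polynomials `x_i v_m ∈ I_{r+1}` are then triangular with respect to the
coefficients at `m x_i`, ordered by `i`, hence linearly independent.
-/

open MvPolynomial

namespace Finsupp

variable {σ : Type*}

lemma eq_of_le_of_degree_eq {b c : σ →₀ ℕ} (h : b ≤ c) (hd : b.degree = c.degree) : b = c := by
  obtain ⟨d, rfl⟩ := exists_add_of_le h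
  rw [map_add, left_eq_add, degree_eq_zero_iff] at hd
  rw [hd, add_zero]

lemma exists_eq_add_single_of_le_of_degree_eq_succ {b c : σ →₀ ℕ} (h : b ≤ c)
    (hd : c.degree = b.degree + 1) : ∃ j, c = b + single j 1 := by
  obtain ⟨d, rfl⟩ := exists_add_of_le h
  rw [map_add, add_right_inj] at hd
  obtain ⟨j, hj⟩ : d.support.Nonempty := by
    rw [support_nonempty_iff]; rintro rfl; simp at hd
  have hjd : single j 1 ≤ d :=
    single_le_iff.mpr (Nat.one_le_iff_ne_zero.mpr (mem_support_iff.mp hj))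
  exact ⟨j, by rw [eq_of_le_of_degree_eq hjd (by rw [degree_single, hd])]⟩

end Finsupp

theorem linearIndependent_of_triangular {ι K M α : Type*} [Ring K] [NoZeroDivisors K]
    [AddCommGroup M] [Module K M] [LinearOrder α] (v : ι → M) (f : ι → M →ₗ[K] K) (o : ι → α)
    (hdiag : ∀ i, f i (v i) ≠ 0) (htri : ∀ i j, i ≠ j → f i (v j) ≠ 0 → o i < o j) :
    LinearIndependent K v := by
  classical
  rw [linearIndependent_iff']
  intro s c hsum i hi
  by_contra hci
  obtain ⟨j, hj, hmax⟩ := (s.filter (c · ≠ 0)).exists_max_image o ⟨i, by simp [hi, hci]⟩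
  rw [Finset.mem_filter] at hj
  have hfj : ∑ k ∈ s, c k * f j (v k) = 0 := by simpa using congrArg (f j) hsum
  rw [Finset.sum_eq_single_of_mem j hj.1] at hfj
  · exact mul_ne_zero hj.2 (hdiag j) hfj
  · intro k hk hkj
    by_contra hne
    obtain ⟨hck, hfk⟩ := mul_ne_zero_iff.mp hne
    exact (htri j k (Ne.symm hkj) hfk).not_ge (hmax k (by simp [hk, hck]))

namespace MvPolynomial

section CommSemiring

variable {σ R : Type*} [CommSemiring R]

lemma mem_span_monomial_iff {A : Set (σ →₀ ℕ)} {p : MvPolynomial σ R} :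
    p ∈ Submodule.span R ((fun γ => monomial γ (1 : R)) '' A) ↔ ↑p.support ⊆ A :=
  (AddMonoidAlgebra.supported_eq_span_single R A ▸ AddMonoidAlgebra.mem_supported :)

lemma homogeneousSubmodule_eq_span_monomial (d : ℕ) :
    homogeneousSubmodule σ R d =
      Submodule.span R ((fun γ => monomial γ (1 : R)) '' {γ | γ.degree = d}) := by
  rw [homogeneousSubmodule_eq_finsupp_supported, AddMonoidAlgebra.supported_eq_span_single]
  rfl

lemma span_monomial_le_homogeneousSubmodule {B : Set (σ →₀ ℕ)} {r : ℕ}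
    (hB : ∀ b ∈ B, b.degree = r) :
    Submodule.span R ((fun γ => monomial γ (1 : R)) '' B) ≤ homogeneousSubmodule σ R r :=
  homogeneousSubmodule_eq_span_monomial (σ := σ) (R := R) r ▸
    Submodule.span_mono (Set.image_mono hB)

lemma disjoint_span_monomial {A A' : Set (σ →₀ ℕ)} (h : Disjoint A A') :
    Disjoint (Submodule.span R ((fun γ => monomial γ (1 : R)) '' A))
      (Submodule.span R ((fun γ => monomial γ (1 : R)) '' A')) := by
  rw [Submodule.disjoint_def]
  intro p hp hp'
  rw [mem_span_monomial_iff] at hp hp'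
  have : (p.support : Set (σ →₀ ℕ)) = ∅ :=
    Set.subset_empty_iff.mp fun γ hγ => Set.disjoint_left.mp h (hp hγ) (hp' hγ)
  simpa using this

lemma span_monomial_sup_span_monomial_eq_homogeneousSubmodule {B : Set (σ →₀ ℕ)} {r : ℕ}
    (hB : ∀ b ∈ B, b.degree = r) :
    Submodule.span R ((fun γ => monomial γ (1 : R)) '' B) ⊔
      Submodule.span R ((fun γ => monomial γ (1 : R)) '' {γ | γ.degree = r ∧ γ ∉ B}) =
      homogeneousSubmodule σ R r := by
  rw [← Submodule.span_union, ← Set.image_union, homogeneousSubmodule_eq_span_monomial]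
  congr 2
  ext γ
  by_cases hγ : γ ∈ B <;> simp [hγ, hB]

lemma monomial_mem_ideal_span_monomial_iff [Nontrivial R] {B : Set (σ →₀ ℕ)} {γ : σ →₀ ℕ} :
    monomial γ (1 : R) ∈ Ideal.span ((fun b => monomial b (1 : R)) '' B) ↔ ∃ b ∈ B, b ≤ γ := by
  classical
  rw [mem_ideal_span_monomial_image, support_monomial, if_neg one_ne_zero]
  simp

lemma mem_of_monomial_mem_ideal_span_of_degree_eq [Nontrivial R] {B : Set (σ →₀ ℕ)} {r : ℕ}
    (hB : ∀ b ∈ B, b.degree = r) {γ : σ →₀ ℕ} (hγ : γ.degree = r)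
    (h : monomial γ (1 : R) ∈ Ideal.span ((fun b => monomial b (1 : R)) '' B)) : γ ∈ B := by
  obtain ⟨b, hb, hle⟩ := monomial_mem_ideal_span_monomial_iff.mp h
  rwa [← Finsupp.eq_of_le_of_degree_eq hle ((hB b hb).trans hγ.symm)]

def IsStronglyStable [LinearOrder σ] (J : Ideal (MvPolynomial σ R)) : Prop :=
  ∀ β : σ →₀ ℕ, monomial β (1 : R) ∈ J → ∀ i j : σ, i < j → β i ≠ 0 →
    monomial (β - Finsupp.single i 1 + Finsupp.single j 1) (1 : R) ∈ J

noncomputable def upShadow [DecidableEq σ] [Fintype σ] (B : Finset (σ →₀ ℕ)) : Finset (σ →₀ ℕ) :=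
  Finset.image₂ (fun b i => b + Finsupp.single i 1) B Finset.univ

lemma support_subset_upShadow [DecidableEq σ] [Fintype σ] {B : Finset (σ →₀ ℕ)} {r : ℕ}
    (hB : ∀ b ∈ B, b.degree = r) {p : MvPolynomial σ R}
    (hp : p ∈ Ideal.span ((fun b => monomial b (1 : R)) '' (B : Set (σ →₀ ℕ))))
    (hph : p.IsHomogeneous (r + 1)) :
    ↑p.support ⊆ (upShadow B : Set (σ →₀ ℕ)) := by
  intro γ hγ
  obtain ⟨b, hb, hle⟩ := mem_ideal_span_monomial_image.mp hp γ hγ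
  have hγr : γ.degree = b.degree + 1 := by
    rw [hB b hb, Finsupp.degree_eq_weight_one]; exact hph (mem_support_iff.mp hγ)
  obtain ⟨j, rfl⟩ := Finsupp.exists_eq_add_single_of_le_of_degree_eq_succ hle hγr
  exact Finset.mem_image₂_of_mem hb (Finset.mem_univ j)

lemma exists_eq_add_single_min_of_mem_upShadow [LinearOrder σ] [Fintype σ] [Nontrivial R]
    {B : Finset (σ →₀ ℕ)} {r : ℕ} (hB : ∀ b ∈ B, b.degree = r)
    (hJ : IsStronglyStable (Ideal.span ((fun b => monomial b (1 : R)) '' (B : Set (σ →₀ ℕ)))))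
    {γ : σ →₀ ℕ} (hγ : γ ∈ upShadow B) :
    ∃ m ∈ B, ∃ i, γ = m + Finsupp.single i 1 ∧ ∀ k, γ k ≠ 0 → i ≤ k := by
  obtain ⟨b, hb, j, -, rfl⟩ := Finset.mem_image₂.mp hγ
  set i := (b + Finsupp.single j 1).support.min' ⟨j, by simp⟩
  have hi : ∀ k, (b + Finsupp.single j 1 : σ →₀ ℕ) k ≠ 0 → i ≤ k :=
    fun k hk => Finset.min'_le _ _ (Finsupp.mem_support_iff.mpr hk)
  rcases (hi j (by simp)).eq_or_lt with hij | hij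
  · exact ⟨b, hb, i, by rw [hij], hi⟩
  have hbi : b i ≠ 0 := by
    have hmem : i ∈ (b + Finsupp.single j 1).support := Finset.min'_mem _ _
    rwa [Finsupp.mem_support_iff, Finsupp.add_apply, Finsupp.single_apply, if_neg hij.ne',
      add_zero] at hmem
  have hib : Finsupp.single i 1 ≤ b := Finsupp.single_le_iff.mpr (Nat.one_le_iff_ne_zero.mpr hbi)
  have hm : b - Finsupp.single i 1 + Finsupp.single j 1 ∈ B := by
    refine mem_of_monomial_mem_ideal_span_of_degree_eq hB ?_
      (hJ b (Ideal.subset_span ⟨b, hb, rfl⟩) i j hij hbi)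
    rw [← hB b hb, ← tsub_add_cancel_of_le hib]
    simp
  refine ⟨_, hm, i, ?_, hi⟩
  rw [add_right_comm, tsub_add_cancel_of_le hib]

end CommSemiring

section CommRing

variable {σ R : Type*} [CommRing R]

lemma coeff_monomial_sub_mul_X_of_ne {A : Set (σ →₀ ℕ)} {w : MvPolynomial σ R}
    (hw : w ∈ Submodule.span R ((fun γ => monomial γ (1 : R)) '' A)) {m : σ →₀ ℕ} (hm : m ∉ A)
    (i : σ) : coeff (m + Finsupp.single i 1) ((monomial m 1 - w) * X i) = 1 := by
  classical
  rw [coeff_mul_X, coeff_sub, coeff_monomial, if_pos rfl,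
    notMem_support_iff.mp fun h => hm (mem_span_monomial_iff.mp hw h), sub_zero]

lemma exists_eq_add_single_of_coeff_monomial_sub_mul_X_ne_zero {A : Set (σ →₀ ℕ)}
    {w : MvPolynomial σ R} (hw : w ∈ Submodule.span R ((fun γ => monomial γ (1 : R)) '' A))
    {m δ : σ →₀ ℕ} {i : σ} (hδ : coeff δ ((monomial m 1 - w) * X i) ≠ 0)
    (hne : δ ≠ m + Finsupp.single i 1) : ∃ ν ∈ A, δ = ν + Finsupp.single i 1 := by
  classical
  rw [coeff_mul_X'] at hδ
  split_ifs at hδ with hiδ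
  · have hδν : δ = δ - Finsupp.single i 1 + Finsupp.single i 1 :=
      (tsub_add_cancel_of_le (Finsupp.single_le_iff.mpr
        (Nat.one_le_iff_ne_zero.mpr (Finsupp.mem_support_iff.mp hiδ)))).symm
    refine ⟨_, ?_, hδν⟩
    by_contra hν
    rw [coeff_sub, coeff_monomial, if_neg fun h => hne (by rw [h]; exact hδν),
      notMem_support_iff.mp fun h => hν (mem_span_monomial_iff.mp hw h), sub_zero] at hδ
    exact hδ rfl
  · exact absurd rfl hδ

end CommRing

section Field

variable {σ K : Type*} [Field K]

lemma finrank_inf_homogeneousSubmodule_succ_le_card_upShadow [DecidableEq σ] [Fintype σ]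
    {B : Finset (σ →₀ ℕ)} {r : ℕ} (hB : ∀ b ∈ B, b.degree = r) :
    Module.finrank K ↥(Submodule.restrictScalars K
        (Ideal.span ((fun b => monomial b (1 : K)) '' (B : Set (σ →₀ ℕ)))) ⊓
        homogeneousSubmodule σ K (r + 1)) ≤
      (upShadow B).card := by
  classical
  calc _ ≤ Module.finrank K ↥(Submodule.span K ((fun γ => monomial γ (1 : K)) ''
          (upShadow B : Set (σ →₀ ℕ)))) :=
        have := FiniteDimensional.span_of_finite K ((upShadow B).finite_toSet.image
          (fun γ => monomial γ (1 : K)))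
        Submodule.finrank_mono fun p hp => mem_span_monomial_iff.mpr
          (support_subset_upShadow hB (Submodule.mem_inf.mp hp).1 (Submodule.mem_inf.mp hp).2)
    _ ≤ _ := by
      rw [← Finset.coe_image]
      exact (finrank_span_finset_le_card _).trans Finset.card_image_le

lemma card_upShadow_le_finrank_inf_homogeneousSubmodule_succ [LinearOrder σ] [Fintype σ]
    {B : Finset (σ →₀ ℕ)} {r : ℕ} (hB : ∀ b ∈ B, b.degree = r)
    (hJ : IsStronglyStable (Ideal.span ((fun b => monomial b (1 : K)) '' (B : Set (σ →₀ ℕ)))))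
    {V : Submodule K (MvPolynomial σ K)} (hVr : V ≤ homogeneousSubmodule σ K r)
    (hVN : homogeneousSubmodule σ K r ≤
      V ⊔ Submodule.span K ((fun γ => monomial γ (1 : K)) '' {γ | γ.degree = r ∧ γ ∉ B})) :
    (upShadow B).card ≤ Module.finrank K ↥(Submodule.restrictScalars K
      (Ideal.span (V : Set (MvPolynomial σ K))) ⊓ homogeneousSubmodule σ K (r + 1)) := by
  classical
  have hsplit : ∀ m : B, ∃ w ∈ Submodule.span K ((fun γ => monomial γ (1 : K)) ''
      {γ | γ.degree = r ∧ γ ∉ B}), monomial m.1 1 - w ∈ V := by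
    intro m
    obtain ⟨v, hv, w, hw, hvw⟩ := Submodule.mem_sup.mp
      (hVN (isHomogeneous_monomial 1 (hB m.1 m.2)))
    exact ⟨w, hw, by rwa [← hvw, add_sub_cancel_right]⟩
  choose w hwN hwV using hsplit
  choose m hmB i hγ hi using fun γ : upShadow B =>
    exists_eq_add_single_min_of_mem_upShadow hB hJ γ.2
  let g : upShadow B → MvPolynomial σ K := fun γ => (monomial (m γ) 1 - w ⟨m γ, hmB γ⟩) * X (i γ)
  have hgI : ∀ γ, g γ ∈ Submodule.restrictScalars K (Ideal.span (V : Set (MvPolynomial σ K))) ⊓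
      homogeneousSubmodule σ K (r + 1) := by
    intro γ
    have hv : (monomial (m γ) 1 - w ⟨m γ, hmB γ⟩ : MvPolynomial σ K).IsHomogeneous r :=
      hVr (hwV ⟨m γ, hmB γ⟩)
    rw [Submodule.mem_inf, Submodule.restrictScalars_mem, mem_homogeneousSubmodule]
    exact ⟨Ideal.mul_mem_right _ _ (Ideal.subset_span (hwV ⟨m γ, hmB γ⟩)),
      hv.mul (isHomogeneous_X K (i γ))⟩
  have hg : LinearIndependent K g := by
    refine linearIndependent_of_triangular g (fun γ => lcoeff K γ.1) i (fun γ => ?_)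
      (fun δ γ hne hδ => ?_)
    · rw [lcoeff_apply, hγ γ, coeff_monomial_sub_mul_X_of_ne (hwN _) fun h => h.2 (hmB γ)]
      exact one_ne_zero
    · obtain ⟨ν, ⟨-, hνB⟩, hδν⟩ := exists_eq_add_single_of_coeff_monomial_sub_mul_X_ne_zero
        (hwN _) hδ fun h => hne (Subtype.ext (h.trans (hγ γ).symm))
      -- `x_{i γ}` divides `δ`; if it were the smallest such variable, `δ / x_{i γ}` would be in `B`
      refine (hi δ (i γ) (by simp [hδν])).lt_of_ne fun heq => hνB ?_
      have : ν = m δ := add_right_cancel (hδν.symm.trans (heq ▸ hγ δ))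
      exact this ▸ hmB δ
  have : Module.Finite K ↥(homogeneousSubmodule σ K (r + 1)) :=
    Module.Finite.iff_fg.mpr (homogeneousSubmodule_fg σ K _)
  have : Module.Finite K ↥(Submodule.restrictScalars K
      (Ideal.span (V : Set (MvPolynomial σ K))) ⊓ homogeneousSubmodule σ K (r + 1)) :=
    Submodule.finiteDimensional_of_le inf_le_right
  rw [← Fintype.card_coe, ← finrank_span_eq_card hg]
  exact Submodule.finrank_mono (Submodule.span_le.mpr (Set.range_subset_iff.mpr hgI))

end Field
end MvPolynomial

theorem stmt_10_general {K : Type*} [Field K] {n : ℕ} (r P : ℕ)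
    (B : Finset (Fin (n + 1) →₀ ℕ))
    (hBdeg : ∀ α ∈ B, α.sum (fun _ e => e) = r)
    (J : Ideal (MvPolynomial (Fin (n + 1)) K))
    (hJ : J = Ideal.span ((fun a : Fin (n + 1) →₀ ℕ => (monomial a (1 : K) :
      MvPolynomial (Fin (n + 1)) K)) '' ↑B))
    (hSS : ∀ β : Fin (n + 1) →₀ ℕ, monomial β (1 : K) ∈ J →
      ∀ i j : Fin (n + 1), i < j → β i ≠ 0 →
        monomial (β - Finsupp.single i 1 + Finsupp.single j 1) (1 : K) ∈ J)
    (hP : Module.finrank K ↥(homogeneousSubmodule (Fin (n + 1)) K (r + 1)) ≤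
      Module.finrank K
        ↥(Submodule.restrictScalars K J ⊓ homogeneousSubmodule (Fin (n + 1)) K (r + 1)) + P) :
    (Module.finrank K
        ↥(Submodule.restrictScalars K J ⊓ homogeneousSubmodule (Fin (n + 1)) K (r + 1)) + P
      = Module.finrank K ↥(homogeneousSubmodule (Fin (n + 1)) K (r + 1)))
    ↔ (∃ V : Submodule K (MvPolynomial (Fin (n + 1)) K),
        V ≤ homogeneousSubmodule (Fin (n + 1)) K r ∧
        Disjoint V (Submodule.span K ((fun γ : Fin (n + 1) →₀ ℕ => (monomial γ (1 : K) :
          MvPolynomial (Fin (n + 1)) K)) '' {γ | γ.sum (fun _ e => e) = r ∧ γ ∉ B})) ∧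
        V ⊔ Submodule.span K ((fun γ : Fin (n + 1) →₀ ℕ => (monomial γ (1 : K) :
          MvPolynomial (Fin (n + 1)) K)) '' {γ | γ.sum (fun _ e => e) = r ∧ γ ∉ B})
          = homogeneousSubmodule (Fin (n + 1)) K r ∧
        Module.finrank K
          ↥(Submodule.restrictScalars K (Ideal.span (V : Set (MvPolynomial (Fin (n + 1)) K)))
            ⊓ homogeneousSubmodule (Fin (n + 1)) K (r + 1)) + P
          = Module.finrank K ↥(homogeneousSubmodule (Fin (n + 1)) K (r + 1))) := by
  subst hJ
  have hB : ∀ b ∈ B, b.degree = r := hBdeg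
  constructor
  · intro h
    refine ⟨_, span_monomial_le_homogeneousSubmodule hB,
      disjoint_span_monomial (Set.disjoint_left.mpr fun _ hb hN => hN.2 hb),
      span_monomial_sup_span_monomial_eq_homogeneousSubmodule hB, ?_⟩
    rwa [Ideal.span, Submodule.span_span_of_tower]
  · rintro ⟨V, hVr, -, hVN, hV⟩
    have hJI := (finrank_inf_homogeneousSubmodule_succ_le_card_upShadow (K := K) hB).trans
      (card_upShadow_le_finrank_inf_homogeneousSubmodule_succ hB hSS hVr hVN.ge)
    omega

/-- **Theorem 2.5** (`H_J ≠ ∅ ⟺ J ∈ B_{p(t)}`): let `J` be a strongly stable ideal generated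
by `s` monomials of degree `r` and `P` a natural number with `dim_K (S/J)_{r+1} ≤ P`
(dimensions of quotient components are encoded as `dim I_{r+1} + P = dim S_{r+1}`).
Then `dim_K (S/J)_{r+1} = P` iff there is a homogeneous ideal `I`, generated by its degree-`r`
component `V`, whose degree-`r` component is a complement of `⟨N(J)_r⟩` in `S_r`
(i.e. `Δ_J(I) ≠ 0`) and with `dim_K (S/I)_{r+1} = P`. -/
theorem stmt_10 {K : Type*} [Field K] {n : ℕ} (r s P : ℕ)
    (B : Finset (Fin (n + 1) →₀ ℕ)) (hBcard : B.card = s)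
    (hBdeg : ∀ α ∈ B, α.sum (fun _ e => e) = r)
    (J : Ideal (MvPolynomial (Fin (n + 1)) K))
    (hJ : J = Ideal.span ((fun a : Fin (n + 1) →₀ ℕ => (monomial a (1 : K) :
      MvPolynomial (Fin (n + 1)) K)) '' ↑B))
    (hSS : ∀ β : Fin (n + 1) →₀ ℕ, monomial β (1 : K) ∈ J →
      ∀ i j : Fin (n + 1), i < j → β i ≠ 0 →
        monomial (β - Finsupp.single i 1 + Finsupp.single j 1) (1 : K) ∈ J)
    (hP : Module.finrank K ↥(homogeneousSubmodule (Fin (n + 1)) K (r + 1)) ≤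
      Module.finrank K
        ↥(Submodule.restrictScalars K J ⊓ homogeneousSubmodule (Fin (n + 1)) K (r + 1)) + P) :
    (Module.finrank K
        ↥(Submodule.restrictScalars K J ⊓ homogeneousSubmodule (Fin (n + 1)) K (r + 1)) + P
      = Module.finrank K ↥(homogeneousSubmodule (Fin (n + 1)) K (r + 1)))
    ↔ (∃ V : Submodule K (MvPolynomial (Fin (n + 1)) K),
        V ≤ homogeneousSubmodule (Fin (n + 1)) K r ∧
        Disjoint V (Submodule.span K ((fun γ : Fin (n + 1) →₀ ℕ => (monomial γ (1 : K) :
          MvPolynomial (Fin (n + 1)) K)) '' {γ | γ.sum (fun _ e => e) = r ∧ γ ∉ B})) ∧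
        V ⊔ Submodule.span K ((fun γ : Fin (n + 1) →₀ ℕ => (monomial γ (1 : K) :
          MvPolynomial (Fin (n + 1)) K)) '' {γ | γ.sum (fun _ e => e) = r ∧ γ ∉ B})
          = homogeneousSubmodule (Fin (n + 1)) K r ∧
        Module.finrank K
          ↥(Submodule.restrictScalars K (Ideal.span (V : Set (MvPolynomial (Fin (n + 1)) K)))
            ⊓ homogeneousSubmodule (Fin (n + 1)) K (r + 1)) + P
          = Module.finrank K ↥(homogeneousSubmodule (Fin (n + 1)) K (r + 1))) :=
  stmt_10_general r P B hBdeg J hJ hSS hP
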